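/- The convolution product of two recurrence matrices is a recurrence matrix, where (A∗B)[U,W] = ∑ A[U₁,W₁]B[U₂,W₂], the sum over all factorizations (U,W) = (U₁,W₁)(U₂,W₂) in the free monoid M_{p×q}. -/

import Mathlib

/-- The free monoid `M_{p×q}` of pairs of equal-length words. -/
def EqPair (p q : ℕ) : Type :=
  {x : List (Fin p) × List (Fin q) // x.1.length = x.2.length}

/-- The single-letter shift operator `ρ(s,t)`: `(ρ(s,t)A)[U,W] = A[Us,Wt]`. -/
def shiftL (p q : ℕ) (K : Type*) [Field K] (s : Fin p) (t : Fin q) :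
    (EqPair p q → K) →ₗ[K] (EqPair p q → K) where
  toFun A := fun x => A ⟨(x.1.1 ++ [s], x.1.2 ++ [t]), by simp [x.2]⟩
  map_add' _ _ := rfl
  map_smul' _ _ := rfl

/-- A subspace of `K^{M_{p×q}}` is recursively closed if it is stable under
all shift operators. -/
def RecClosed (p q : ℕ) (K : Type*) [Field K]
    (V : Submodule K (EqPair p q → K)) : Prop :=
  ∀ (s : Fin p) (t : Fin q), ∀ A ∈ V, shiftL p q K s t A ∈ V

/-- The recursive closure of `A`: the smallest recursively closed subspace
containing `A`. -/
def recClosure (p q : ℕ) (K : Type*) [Field K] (A : EqPair p q → K) :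
    Submodule K (EqPair p q → K) :=
  sInf {V | A ∈ V ∧ RecClosed p q K V}

/-- `A` is a recurrence matrix if its recursive closure is
finite-dimensional. -/
def IsRecMatrix (p q : ℕ) (K : Type*) [Field K] (A : EqPair p q → K) : Prop :=
  FiniteDimensional K (recClosure p q K A)

/-- The matrix product `(A·B)[U,W] = ∑_V A[U,V] B[V,W]`. -/
def matMul {p r q : ℕ} {K : Type*} [Field K]
    (A : EqPair p r → K) (B : EqPair r q → K) : EqPair p q → K :=
  fun x => ∑ V : Fin x.1.1.length → Fin r,
    A ⟨(x.1.1, List.ofFn V), by simp⟩ * B ⟨(List.ofFn V, x.1.2), by simp [x.2]⟩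

/-- The convolution product
`(A∗B)[U,W] = ∑_{(U,W)=(U₁,W₁)(U₂,W₂)} A[U₁,W₁] B[U₂,W₂]`; since the two
words have equal length, factorizations correspond to cut positions
`k = 0, …, l(U)`. -/
def convMul {p q : ℕ} {K : Type*} [Field K] (A B : EqPair p q → K) :
    EqPair p q → K :=
  fun x => ∑ k ∈ Finset.range (x.1.1.length + 1),
    A ⟨(x.1.1.take k, x.1.2.take k), by simp [x.2]⟩ *
      B ⟨(x.1.1.drop k, x.1.2.drop k), by simp [x.2]⟩

/-!
Let `V_A`, `V_B` be the recursive closures of `A` and `B`. By the Leibniz identity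
`ρ(s,t)(a ∗ b) = b[∅,∅] • ρ(s,t)a + a ∗ ρ(s,t)b`, the subspace `V_A ∗ V_B + V_A` is recursively
closed; it contains `A ∗ B` and is finite-dimensional, being spanned by the image of a bilinear
map on `V_A × V_B` together with `V_A`.
-/

namespace EqPair

variable {p q : ℕ}

def nil : EqPair p q := ⟨([], []), rfl⟩

lemma ext {x y : EqPair p q} (h₁ : x.1.1 = y.1.1) (h₂ : x.1.2 = y.1.2) : x = y :=
  Subtype.ext (Prod.ext h₁ h₂)

end EqPair

instance Submodule.finite_map₂ {R M N P : Type*} [CommSemiring R] [AddCommMonoid M]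
    [AddCommMonoid N] [AddCommMonoid P] [Module R M] [Module R N] [Module R P]
    (f : M →ₗ[R] N →ₗ[R] P) (V : Submodule R M) (W : Submodule R N) [Module.Finite R V]
    [Module.Finite R W] : Module.Finite R (Submodule.map₂ f V W) :=
  Module.Finite.iff_fg.mpr ((Module.Finite.iff_fg.mp ‹_›).map₂ f (Module.Finite.iff_fg.mp ‹_›))

section

variable {p q : ℕ} {K : Type*} [Field K]

theorem shiftL_convMul (s : Fin p) (t : Fin q) (a b : EqPair p q → K) :
    shiftL p q K s t (convMul a b)
      = b EqPair.nil • shiftL p q K s t a + convMul a (shiftL p q K s t b) := by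
  funext x
  obtain ⟨⟨U, W⟩, h : U.length = W.length⟩ := x
  simp only [shiftL, LinearMap.coe_mk, AddHom.coe_mk, convMul, List.length_append,
    List.length_singleton]
  -- the cut after the new last letter gives `a[Us,Wt] b[∅,∅]`; every other cut shifts `b`
  rw [Finset.sum_range_succ, add_comm, mul_comm]
  congr 1
  · congr 1 <;> apply congrArg <;> apply EqPair.ext <;> simp [EqPair.nil, h]
  · refine Finset.sum_congr rfl fun k hk => ?_
    have hkU : k ≤ U.length := Nat.lt_succ_iff.mp (Finset.mem_range.mp hk)
    have hkW : k ≤ W.length := h ▸ hkU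
    congr 1 <;> apply congrArg <;> apply EqPair.ext <;>
      simp [List.take_append_of_le_length, List.drop_append_of_le_length, hkU, hkW]

variable (p q K) in
def convMulₗ : (EqPair p q → K) →ₗ[K] (EqPair p q → K) →ₗ[K] (EqPair p q → K) :=
  LinearMap.mk₂ K convMul
    (fun _ _ _ => funext fun _ => (Finset.sum_congr rfl fun _ _ => add_mul _ _ _).trans
      Finset.sum_add_distrib)
    (fun _ _ _ => funext fun _ => (Finset.sum_congr rfl fun _ _ => mul_assoc _ _ _).trans
      (Finset.mul_sum _ _ _).symm)
    (fun _ _ _ => funext fun _ => (Finset.sum_congr rfl fun _ _ => mul_add _ _ _).trans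
      Finset.sum_add_distrib)
    (fun _ _ _ => funext fun _ => (Finset.sum_congr rfl fun _ _ => mul_left_comm _ _ _).trans
      (Finset.mul_sum _ _ _).symm)

@[simp]
lemma convMulₗ_apply (a b : EqPair p q → K) : convMulₗ p q K a b = convMul a b := rfl

lemma mem_recClosure_self (A : EqPair p q → K) : A ∈ recClosure p q K A :=
  Submodule.mem_sInf.mpr fun _ hV => hV.1

lemma recClosed_recClosure (A : EqPair p q → K) : RecClosed p q K (recClosure p q K A) :=
  fun s t _ hx => Submodule.mem_sInf.mpr fun V hV => hV.2 s t _ (Submodule.mem_sInf.mp hx V hV)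

lemma IsRecMatrix.of_mem {A : EqPair p q → K} {V : Submodule K (EqPair p q → K)}
    [FiniteDimensional K V] (hA : A ∈ V) (hV : RecClosed p q K V) : IsRecMatrix p q K A :=
  Submodule.finiteDimensional_of_le (sInf_le ⟨hA, hV⟩ : recClosure p q K A ≤ V)

lemma RecClosed.map₂_convMulₗ_sup {V W : Submodule K (EqPair p q → K)}
    (hV : RecClosed p q K V) (hW : RecClosed p q K W) :
    RecClosed p q K (Submodule.map₂ (convMulₗ p q K) V W ⊔ V) := by
  intro s t
  suffices h : Submodule.map₂ (convMulₗ p q K) V W ⊔ V ≤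
      (Submodule.map₂ (convMulₗ p q K) V W ⊔ V).comap (shiftL p q K s t) from fun _ hx => h hx
  refine sup_le (Submodule.map₂_le.mpr fun a ha b hb => ?_)
    fun a ha => Submodule.mem_sup_right (hV s t a ha)
  rw [Submodule.mem_comap, convMulₗ_apply, shiftL_convMul]
  exact add_mem (Submodule.mem_sup_right (Submodule.smul_mem _ _ (hV s t a ha)))
    (Submodule.mem_sup_left (Submodule.apply_mem_map₂ _ ha (hW s t b hb)))

end

/-- The convolution product of two recurrence matrices is a recurrence
matrix. -/
theorem convMul_isRecMatrix {p q : ℕ} {K : Type*} [Field K]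
    (A B : EqPair p q → K) (hA : IsRecMatrix p q K A)
    (hB : IsRecMatrix p q K B) :
    IsRecMatrix p q K (convMul A B) := by
  have : FiniteDimensional K (recClosure p q K A) := hA
  have : FiniteDimensional K (recClosure p q K B) := hB
  exact IsRecMatrix.of_mem
    (Submodule.mem_sup_left (Submodule.apply_mem_map₂ (convMulₗ p q K)
      (mem_recClosure_self A) (mem_recClosure_self B)))
    ((recClosed_recClosure A).map₂_convMulₗ_sup (recClosed_recClosure B))
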